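/- Let p, q > 0 with p + q = 1. Let a = (a_1,…,a_n) with a_1 ≥ … ≥ a_n > 0, b = (b_1,…,b_n) with b_1 ≥ … ≥ b_n ≥ 0, and let x = (x_1,…,x_n) with x_1 ≥ … ≥ x_n ≥ 0 and x ≺ b be such that Σ_{j=1}^n a_j^p x_j^q ≥ Σ_{j=1}^n a_j^p y_j^q for every y = (y_1,…,y_n) with y_1 ≥ … ≥ y_n ≥ 0 and y ≺ b. Then: (a) there exist indices 0 = n_0 < n_1 < … < n_k = n such that for each 0 ≤ i < k, Σ_{j=n_i+1}^{n_{i+1}} x_j = Σ_{j=n_i+1}^{n_{i+1}} b_j and (x_{n_i+1},…,x_{n_{i+1}}) = α_i (a_{n_i+1},…,a_{n_{i+1}}), where α_i = (b_{n_i+1}+…+b_{n_{i+1}})/(a_{n_i+1}+…+a_{n_{i+1}}); (b) these indices are given by n_{i+1} = max{ r : n_i < r ≤ n and α (a_{n_i+1},…,a_r) ≺ (b_{n_i+1},…,b_r), where α = (b_{n_i+1}+…+b_r)/(a_{n_i+1}+…+a_r) }. -/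

import Mathlib

open Matrix
open scoped ComplexOrder Classical

/-- The vector of a tuple's entries sorted in decreasing (nonincreasing) order. -/
noncomputable def sortDec {n : ℕ} (x : Fin n → ℝ) : Fin n → ℝ :=
  fun i => x (Tuple.sort x i.rev)

/-- The eigenvalues of a Hermitian matrix arranged in decreasing order,
`λ(A)`; junk value `0` if `A` is not Hermitian. -/
noncomputable def eigsDec {n : ℕ} (A : Matrix (Fin n) (Fin n) ℂ) : Fin n → ℝ :=
  if hA : A.IsHermitian then sortDec hA.eigenvalues else 0

/-- The eigenvalues of a Hermitian matrix arranged in increasing order. -/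
noncomputable def eigsInc {n : ℕ} (A : Matrix (Fin n) (Fin n) ℂ) : Fin n → ℝ :=
  fun i => eigsDec A i.rev

/-- `Λ↓(A)`: the diagonal matrix of the eigenvalues of `A` in decreasing order. -/
noncomputable def LambdaDown {n : ℕ} (A : Matrix (Fin n) (Fin n) ℂ) :
    Matrix (Fin n) (Fin n) ℂ :=
  Matrix.diagonal fun i => (eigsDec A i : ℂ)

/-- `Λ↑(A)`: the diagonal matrix of the eigenvalues of `A` in increasing order. -/
noncomputable def LambdaUp {n : ℕ} (A : Matrix (Fin n) (Fin n) ℂ) :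
    Matrix (Fin n) (Fin n) ℂ :=
  Matrix.diagonal fun i => (eigsInc A i : ℂ)

/-- `x ≺ y`: the sum of the `k` largest entries of `x` is at most that of `y`
for every `k`, with equality of the total sums. -/
def Majorizes {n : ℕ} (x y : Fin n → ℝ) : Prop :=
  (∀ k : ℕ, ∑ i ∈ Finset.univ.filter (fun i : Fin n => (i : ℕ) < k), sortDec x i ≤
      ∑ i ∈ Finset.univ.filter (fun i : Fin n => (i : ℕ) < k), sortDec y i) ∧
    (∑ i, x i) = ∑ i, y i

/-- A function `d` is Schur-convex if `x ≺ y` implies `d x ≤ d y`. -/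
def SchurConvex {n : ℕ} (d : (Fin n → ℝ) → ℝ) : Prop :=
  ∀ x y : Fin n → ℝ, Majorizes x y → d x ≤ d y

/-- A density matrix: positive semidefinite with trace one. -/
def IsDensityMatrix {n : ℕ} (ρ : Matrix (Fin n) (Fin n) ℂ) : Prop :=
  ρ.PosSemidef ∧ ρ.trace = 1

/-- A quantum channel: completely positive trace preserving map in Kraus form. -/
def IsQuantumChannel {n : ℕ}
    (Φ : Matrix (Fin n) (Fin n) ℂ → Matrix (Fin n) (Fin n) ℂ) : Prop :=
  ∃ (r : ℕ) (F : Fin r → Matrix (Fin n) (Fin n) ℂ),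
    (∑ j, (F j)ᴴ * F j) = 1 ∧ ∀ X, Φ X = ∑ j, F j * X * (F j)ᴴ

/-- A unital quantum channel. -/
def IsUnitalChannel {n : ℕ}
    (Φ : Matrix (Fin n) (Fin n) ℂ → Matrix (Fin n) (Fin n) ℂ) : Prop :=
  IsQuantumChannel Φ ∧ Φ 1 = 1

/-- A mixed unitary channel: a convex combination of unitary conjugations. -/
def IsMixedUnitaryChannel {n : ℕ}
    (Φ : Matrix (Fin n) (Fin n) ℂ → Matrix (Fin n) (Fin n) ℂ) : Prop :=
  ∃ (r : ℕ) (t : Fin r → ℝ) (U : Fin r → Matrix (Fin n) (Fin n) ℂ),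
    (∀ j, 0 ≤ t j) ∧ (∑ j, t j) = 1 ∧
      (∀ j, U j ∈ Matrix.unitaryGroup (Fin n) ℂ) ∧
      ∀ X, Φ X = ∑ j, (t j : ℂ) • (U j * X * (U j)ᴴ)

/-- Functional calculus: `f(A)` for a Hermitian matrix `A`, via the spectral theorem;
junk value `0` if `A` is not Hermitian. -/
noncomputable def matFun {n : ℕ} (f : ℝ → ℝ) (A : Matrix (Fin n) (Fin n) ℂ) :
    Matrix (Fin n) (Fin n) ℂ :=
  if hA : A.IsHermitian then
    (hA.eigenvectorUnitary : Matrix (Fin n) (Fin n) ℂ) *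
      Matrix.diagonal (fun i => (f (hA.eigenvalues i) : ℂ)) *
      (hA.eigenvectorUnitary : Matrix (Fin n) (Fin n) ℂ)ᴴ
  else 0

/-- The positive semidefinite square root of a PSD matrix, as `Matrix.PosSemidef.sqrt`
was defined in Mathlib (Dec 2024); that definition has since been removed. -/
noncomputable def posSemidefSqrtOld {n : ℕ} {A : Matrix (Fin n) (Fin n) ℂ} (hA : A.PosSemidef) :
    Matrix (Fin n) (Fin n) ℂ :=
  (hA.1.eigenvectorUnitary : Matrix (Fin n) (Fin n) ℂ) *
    Matrix.diagonal (fun i => ((Real.sqrt (hA.1.eigenvalues i) : ℝ) : ℂ)) *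
    (star hA.1.eigenvectorUnitary : Matrix (Fin n) (Fin n) ℂ)

/-- `|A| = (AᴴA)^{1/2}`. -/
noncomputable def matAbs {n : ℕ} (A : Matrix (Fin n) (Fin n) ℂ) :
    Matrix (Fin n) (Fin n) ℂ :=
  posSemidefSqrtOld (Matrix.posSemidef_conjTranspose_mul_self A)

/-- `tr|A|`, the sum of the singular values of `A`. -/
noncomputable def traceAbs {n : ℕ} (A : Matrix (Fin n) (Fin n) ℂ) : ℝ :=
  ((matAbs A).trace).re

/-- The singular values of `A` in decreasing order. -/
noncomputable def singVals {n : ℕ} (A : Matrix (Fin n) (Fin n) ℂ) : Fin n → ℝ :=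
  eigsDec (matAbs A)

/-- The positive semidefinite square root of a PSD matrix (junk value `0` otherwise). -/
noncomputable def matSqrt {n : ℕ} (A : Matrix (Fin n) (Fin n) ℂ) :
    Matrix (Fin n) (Fin n) ℂ :=
  if hA : A.PosSemidef then posSemidefSqrtOld hA else 0

/-- The fidelity `F(ρ,σ) = tr|ρ^{1/2} σ^{1/2}|`. -/
noncomputable def fidelity {n : ℕ} (ρ σ : Matrix (Fin n) (Fin n) ℂ) : ℝ :=
  traceAbs (matSqrt ρ * matSqrt σ)

/-- The relative entropy `S(ρ‖σ) = tr(ρ (log ρ - log σ))`. -/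
noncomputable def relEntropy {n : ℕ} (ρ σ : Matrix (Fin n) (Fin n) ℂ) : ℝ :=
  ((ρ * (matFun Real.log ρ - matFun Real.log σ)).trace).re

/-- The (real) trace of a matrix whose trace is real. -/
noncomputable def trR {n : ℕ} (A : Matrix (Fin n) (Fin n) ℂ) : ℝ := A.trace.re

/-- The sum of the entries `v_i` with `m ≤ i < k` (0-indexed). -/
noncomputable def segSum {n : ℕ} (v : Fin n → ℝ) (m k : ℕ) : ℝ :=
  ∑ i ∈ Finset.univ.filter (fun i : Fin n => m ≤ (i : ℕ) ∧ (i : ℕ) < k), v i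

/-- Normalized majorization of the segment of `a` on `[m, k)` by the corresponding segment of
`b` (both segments being nonincreasing), written in cross-multiplied form:
`(Σ_{m ≤ i < p} a_i)/(Σ_{m ≤ i < k} a_i) ≤ (Σ_{m ≤ i < p} b_i)/(Σ_{m ≤ i < k} b_i)`
for all `m ≤ p ≤ k`. -/
def SegMaj {n : ℕ} (a b : Fin n → ℝ) (m k : ℕ) : Prop :=
  ∀ p : ℕ, m ≤ p → p ≤ k →
    segSum a m p * segSum b m k ≤ segSum b m p * segSum a m k

/-!
Choose the breakpoints greedily, each `nᵢ₊₁` as large as possible with the normalized segment of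
`a` on `[nᵢ, nᵢ₊₁)` majorized by that of `b`, and let `x*` be `αᵢ a` on the `i`-th block, `αᵢ`
the ratio of the block sums of `b` and `a`. Maximality forces `α₀ < α₁ < ⋯` (two blocks whose
ratios do not increase could be merged), which makes `x*` nonincreasing with `x* ≺ b`.

For a feasible `y`, bound each `a_j ^ p * y_j ^ q` by the tangent plane of the concave function
`(a, y) ↦ a ^ p * y ^ q` along the ray `y = αᵢ a`. Summing, the excess over the objective at `x*`
is `q Σᵢ αᵢ ^ (q - 1) (Σ_{block i} y - Σ_{block i} b)`, which is `≤ 0` by Abel summation: the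
weights decrease and the prefix sums of `y` are dominated by those of `b`, with equal totals.
The tangent bound is strict unless `y = x*`, so a maximizer must equal `x*`.
-/

section SegSum

variable {n : ℕ}

theorem segSum_eq_sum_ite (v : Fin n → ℝ) (m k : ℕ) :
    segSum v m k = ∑ i : Fin n, if m ≤ (i : ℕ) ∧ (i : ℕ) < k then v i else 0 :=
  Finset.sum_filter _ _

theorem segSum_add_segSum (v : Fin n → ℝ) {m k l : ℕ} (hmk : m ≤ k) (hkl : k ≤ l) :
    segSum v m k + segSum v k l = segSum v m l := by
  simp only [segSum_eq_sum_ite, ← Finset.sum_add_distrib]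
  refine Finset.sum_congr rfl fun i _ => ?_
  split_ifs <;> first | omega | simp

theorem segSum_of_le (v : Fin n → ℝ) {m k : ℕ} (h : k ≤ m) : segSum v m k = 0 :=
  Finset.sum_eq_zero fun i hi => by simp at hi; omega

theorem segSum_congr {v w : Fin n → ℝ} {m k : ℕ}
    (h : ∀ i : Fin n, m ≤ (i : ℕ) → (i : ℕ) < k → v i = w i) : segSum v m k = segSum w m k :=
  Finset.sum_congr rfl fun i hi => by simp only [Finset.mem_filter] at hi; exact h i hi.2.1 hi.2.2

theorem segSum_const_mul (c : ℝ) (v : Fin n → ℝ) (m k : ℕ) :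
    segSum (fun i => c * v i) m k = c * segSum v m k :=
  (Finset.mul_sum _ _ _).symm

theorem segSum_sub (v w : Fin n → ℝ) (m k : ℕ) :
    segSum (v - w) m k = segSum v m k - segSum w m k :=
  Finset.sum_sub_distrib _ _

theorem segSum_nonneg {v : Fin n → ℝ} (hv : ∀ i, 0 ≤ v i) (m k : ℕ) : 0 ≤ segSum v m k :=
  Finset.sum_nonneg fun i _ => hv i

theorem le_segSum {v : Fin n → ℝ} (hv : ∀ i, 0 ≤ v i) {m k : ℕ} (j : Fin n)
    (hm : m ≤ (j : ℕ)) (hk : (j : ℕ) < k) : v j ≤ segSum v m k :=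
  Finset.single_le_sum (fun i _ => hv i) (by simp [hm, hk])

theorem segSum_pos {v : Fin n → ℝ} (hv : ∀ i, 0 < v i) {m k : ℕ} (hmk : m < k) (hmn : m < n) :
    0 < segSum v m k :=
  (hv ⟨m, hmn⟩).trans_le (le_segSum (fun i => (hv i).le) ⟨m, hmn⟩ le_rfl hmk)

theorem segSum_succ (v : Fin n → ℝ) (j : Fin n) : segSum v j (j + 1) = v j := by
  rw [segSum, Finset.sum_eq_single j] <;> simp +contextual [Fin.ext_iff]
  all_goals omega

theorem segSum_zero_of_le (v : Fin n → ℝ) {k : ℕ} (hk : n ≤ k) : segSum v 0 k = ∑ i, v i :=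
  Finset.sum_congr (by ext i; simp; omega) fun _ _ => rfl

theorem sum_filter_lt_eq_segSum (v : Fin n → ℝ) (k : ℕ) :
    ∑ i ∈ Finset.univ.filter (fun i : Fin n => (i : ℕ) < k), v i = segSum v 0 k := by
  simp [segSum]

theorem segSum_zero_eq_sum_range {s : ℕ → ℕ} (hs : Monotone s) (hs0 : s 0 = 0)
    (v : Fin n → ℝ) (t : ℕ) :
    segSum v 0 (s t) = ∑ i ∈ Finset.range t, segSum v (s i) (s (i + 1)) := by
  induction t with
  | zero => rw [hs0, segSum_of_le v le_rfl, Finset.sum_range_zero]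
  | succ t ih =>
    rw [Finset.sum_range_succ, ← ih, segSum_add_segSum v (Nat.zero_le _) (hs t.le_succ)]

theorem sortDec_eq_self {v : Fin n → ℝ} (hv : Antitone v) : sortDec v = v := by
  have h := Tuple.comp_sort_eq_comp_iff_monotone.mpr
    (show Monotone (v ∘ Fin.revPerm) from fun i j hij => hv (Fin.rev_le_rev.mpr hij))
  funext i
  simpa [sortDec] using congrFun h.symm i.rev

end SegSum

theorem majorizes_iff_of_antitone {n : ℕ} {x y : Fin n → ℝ} (hx : Antitone x) (hy : Antitone y) :
    Majorizes x y ↔ (∀ k, segSum x 0 k ≤ segSum y 0 k) ∧ ∑ i, x i = ∑ i, y i := by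
  simp only [Majorizes, sortDec_eq_self hx, sortDec_eq_self hy, sum_filter_lt_eq_segSum]

section Partition

variable {n : ℕ} (a b : Fin n → ℝ)

theorem segMaj_succ (m : ℕ) : SegMaj a b m (m + 1) := by
  intro p hmp hpm
  obtain rfl | rfl : p = m ∨ p = m + 1 := by omega
  · simp [segSum_of_le _ le_rfl]
  · exact (mul_comm _ _).le

noncomputable def nextBreak (m : ℕ) : ℕ :=
  Nat.findGreatest (fun r => m < r ∧ SegMaj a b m r) n

theorem nextBreak_le (m : ℕ) : nextBreak a b m ≤ n := Nat.findGreatest_le n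

theorem le_nextBreak {m r : ℕ} (hmr : m < r) (hrn : r ≤ n) (h : SegMaj a b m r) :
    r ≤ nextBreak a b m :=
  Nat.le_findGreatest hrn ⟨hmr, h⟩

theorem lt_nextBreak {m : ℕ} (hm : m < n) : m < nextBreak a b m :=
  le_nextBreak a b m.lt_succ_self hm (segMaj_succ a b m)

theorem segMaj_nextBreak {m : ℕ} (hm : m < n) : SegMaj a b m (nextBreak a b m) :=
  (Nat.findGreatest_spec (P := fun r => m < r ∧ SegMaj a b m r) hm
    ⟨m.lt_succ_self, segMaj_succ a b m⟩).2

/-- The paper's `nᵢ`, stuck at `n` once it is reached; `numBlocks a b` below is its `k`. -/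
noncomputable def breakpt : ℕ → ℕ
  | 0 => 0
  | i + 1 => if breakpt i < n then nextBreak a b (breakpt i) else n

theorem breakpt_zero : breakpt a b 0 = 0 := rfl

theorem breakpt_le (i : ℕ) : breakpt a b i ≤ n := by
  cases i with
  | zero => exact Nat.zero_le n
  | succ i =>
    rw [breakpt]
    split
    · exact nextBreak_le a b _
    · exact le_rfl

theorem breakpt_self : breakpt a b n = n := by
  have key : ∀ i, i ≤ breakpt a b i ∨ breakpt a b i = n := by
    intro i
    induction i with
    | zero => exact Or.inl le_rfl
    | succ i ih =>
      rw [breakpt]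
      split
      · have := lt_nextBreak a b ‹_›
        omega
      · exact Or.inr rfl
  exact (key n).elim (fun h => le_antisymm (breakpt_le a b n) h) id

theorem breakpt_mono : Monotone (breakpt a b) := by
  refine monotone_nat_of_le_succ fun i => ?_
  conv_rhs => rw [breakpt]
  split
  · exact (lt_nextBreak a b ‹_›).le
  · exact breakpt_le a b i

noncomputable def numBlocks : ℕ := Nat.find (p := fun i => breakpt a b i = n) ⟨n, breakpt_self a b⟩

theorem breakpt_numBlocks : breakpt a b (numBlocks a b) = n :=
  Nat.find_spec (p := fun i => breakpt a b i = n) ⟨n, breakpt_self a b⟩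

variable {a b}

theorem breakpt_lt_of_lt_numBlocks {i : ℕ} (hi : i < numBlocks a b) : breakpt a b i < n :=
  (breakpt_le a b i).lt_of_ne
    (Nat.find_min (p := fun i => breakpt a b i = n) ⟨n, breakpt_self a b⟩ hi)

theorem breakpt_succ {i : ℕ} (hi : i < numBlocks a b) :
    breakpt a b (i + 1) = nextBreak a b (breakpt a b i) := by
  rw [breakpt, if_pos (breakpt_lt_of_lt_numBlocks hi)]

theorem breakpt_lt_succ {i : ℕ} (hi : i < numBlocks a b) : breakpt a b i < breakpt a b (i + 1) := by
  rw [breakpt_succ hi]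
  exact lt_nextBreak a b (breakpt_lt_of_lt_numBlocks hi)

theorem segMaj_breakpt {i : ℕ} (hi : i < numBlocks a b) :
    SegMaj a b (breakpt a b i) (breakpt a b (i + 1)) := by
  rw [breakpt_succ hi]
  exact segMaj_nextBreak a b (breakpt_lt_of_lt_numBlocks hi)

theorem le_breakpt_succ {i r : ℕ} (hi : i < numBlocks a b) (hir : breakpt a b i < r) (hrn : r ≤ n)
    (h : SegMaj a b (breakpt a b i) r) : r ≤ breakpt a b (i + 1) := by
  rw [breakpt_succ hi]
  exact le_nextBreak a b hir hrn h

theorem lt_numBlocks_of_breakpt_lt {i : ℕ} (hi : breakpt a b i < n) : i < numBlocks a b := by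
  by_contra h
  have := breakpt_mono a b (not_lt.mp h)
  rw [breakpt_numBlocks] at this
  omega

variable (a b)

noncomputable def blockOf (j : ℕ) : ℕ :=
  Nat.findGreatest (fun i => breakpt a b i ≤ j) (numBlocks a b)

variable {a b}

theorem breakpt_blockOf_le (j : ℕ) : breakpt a b (blockOf a b j) ≤ j :=
  Nat.findGreatest_spec (P := fun i => breakpt a b i ≤ j) (Nat.zero_le _) (Nat.zero_le j)

theorem blockOf_lt_numBlocks {j : ℕ} (hj : j < n) : blockOf a b j < numBlocks a b :=
  lt_numBlocks_of_breakpt_lt ((breakpt_blockOf_le j).trans_lt hj)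

theorem lt_breakpt_blockOf_succ {j : ℕ} (hj : j < n) : j < breakpt a b (blockOf a b j + 1) := by
  by_contra h
  have := Nat.le_findGreatest (P := fun i => breakpt a b i ≤ j) (blockOf_lt_numBlocks hj)
    (not_lt.mp h)
  exact this.not_gt (blockOf a b j).lt_succ_self

theorem blockOf_eq {i j : ℕ} (hi : i < numBlocks a b) (hij : breakpt a b i ≤ j)
    (hji : j < breakpt a b (i + 1)) : blockOf a b j = i := by
  have hle : i ≤ blockOf a b j := Nat.le_findGreatest hi.le hij
  by_contra hne
  have := breakpt_mono a b (show i + 1 ≤ blockOf a b j by omega)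
  have := breakpt_blockOf_le (a := a) (b := b) j
  omega

end Partition

section Ratio

variable {n : ℕ}

theorem segMaj_iff {a b : Fin n → ℝ} {m k : ℕ} (hA : 0 < segSum a m k) :
    SegMaj a b m k ↔ ∀ p, m ≤ p → p ≤ k →
      segSum b m k / segSum a m k * segSum a m p ≤ segSum b m p := by
  refine forall₃_congr fun p _ _ => ?_
  rw [div_mul_eq_mul_div, div_le_iff₀ hA, mul_comm (segSum b m k)]

theorem SegMaj.append {a b : Fin n → ℝ} (ha : ∀ i, 0 ≤ a i) {m s t : ℕ} (hms : m ≤ s)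
    (hst : s ≤ t) (hA₁ : 0 < segSum a m s) (hA₂ : 0 < segSum a s t)
    (h₁ : SegMaj a b m s) (h₂ : SegMaj a b s t)
    (hratio : segSum b s t / segSum a s t ≤ segSum b m s / segSum a m s) :
    SegMaj a b m t := by
  rw [segMaj_iff hA₁] at h₁
  rw [segMaj_iff hA₂] at h₂
  have hA : 0 < segSum a m t := by rw [← segSum_add_segSum a hms hst]; positivity
  rw [segMaj_iff hA]
  set α₁ := segSum b m s / segSum a m s
  set α₂ := segSum b s t / segSum a s t
  set γ := segSum b m t / segSum a m t
  have hB₁ : α₁ * segSum a m s = segSum b m s := div_mul_cancel₀ _ hA₁.ne'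
  have hB₂ : α₂ * segSum a s t = segSum b s t := div_mul_cancel₀ _ hA₂.ne'
  have hB : γ * segSum a m t = segSum b m t := div_mul_cancel₀ _ hA.ne'
  rw [← segSum_add_segSum a hms hst, ← segSum_add_segSum b hms hst] at hB
  have hγ₁ : γ ≤ α₁ := by nlinarith
  have hγ₂ : α₂ ≤ γ := by nlinarith
  intro p hmp hpt
  rcases le_total p s with hps | hsp
  · have := segSum_nonneg ha m p
    calc γ * segSum a m p ≤ α₁ * segSum a m p := by gcongr
      _ ≤ segSum b m p := h₁ p hmp hps
  · have hrest := segSum_nonneg ha p t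
    have hsplit := segSum_add_segSum a hsp hpt
    rw [← segSum_add_segSum a hms hsp, ← segSum_add_segSum b hms hsp]
    have := h₂ p hsp hpt
    nlinarith

end Ratio

section BlockProfile

variable {n : ℕ} (a b : Fin n → ℝ)

noncomputable def blockRatio (i : ℕ) : ℝ :=
  segSum b (breakpt a b i) (breakpt a b (i + 1)) / segSum a (breakpt a b i) (breakpt a b (i + 1))

noncomputable def blockProfile (j : Fin n) : ℝ := blockRatio a b (blockOf a b j) * a j

variable {a b}

theorem segSum_block_pos (ha : ∀ i, 0 < a i) {i : ℕ} (hi : i < numBlocks a b) :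
    0 < segSum a (breakpt a b i) (breakpt a b (i + 1)) :=
  segSum_pos ha (breakpt_lt_succ hi) (breakpt_lt_of_lt_numBlocks hi)

theorem blockRatio_mul (ha : ∀ i, 0 < a i) {i : ℕ} (hi : i < numBlocks a b) :
    blockRatio a b i * segSum a (breakpt a b i) (breakpt a b (i + 1)) =
      segSum b (breakpt a b i) (breakpt a b (i + 1)) :=
  div_mul_cancel₀ _ (segSum_block_pos ha hi).ne'

theorem blockRatio_nonneg (ha : ∀ i, 0 < a i) (hb : ∀ i, 0 ≤ b i) (i : ℕ) :
    0 ≤ blockRatio a b i :=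
  div_nonneg (segSum_nonneg hb _ _) (segSum_nonneg (fun j => (ha j).le) _ _)

theorem blockRatio_mul_segSum_le (ha : ∀ i, 0 < a i) {i p : ℕ} (hi : i < numBlocks a b)
    (hip : breakpt a b i ≤ p) (hpi : p ≤ breakpt a b (i + 1)) :
    blockRatio a b i * segSum a (breakpt a b i) p ≤ segSum b (breakpt a b i) p :=
  (segMaj_iff (segSum_block_pos ha hi)).1 (segMaj_breakpt hi) p hip hpi

/-- By maximality of the breakpoints: otherwise `SegMaj.append` would merge blocks `i` and
`i + 1`. -/
theorem blockRatio_lt_succ (ha : ∀ i, 0 < a i) {i : ℕ} (hi : i + 1 < numBlocks a b) :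
    blockRatio a b i < blockRatio a b (i + 1) := by
  have hi' : i < numBlocks a b := by omega
  by_contra h
  have hmerge := (segMaj_breakpt hi').append (fun j => (ha j).le) (breakpt_lt_succ hi').le
    (breakpt_lt_succ hi).le (segSum_block_pos ha hi') (segSum_block_pos ha hi)
    (segMaj_breakpt hi) (not_lt.mp h)
  exact (breakpt_lt_succ hi).not_ge <| le_breakpt_succ hi'
    ((breakpt_lt_succ hi').trans (breakpt_lt_succ hi)) (breakpt_le a b _) hmerge

theorem blockRatio_pos (ha : ∀ i, 0 < a i) (hb : ∀ i, 0 ≤ b i) (hbmono : Antitone b)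
    (hb₀ : ∃ j, 0 < b j) {i : ℕ} (hi : i < numBlocks a b) : 0 < blockRatio a b i := by
  induction i with
  | zero =>
    obtain ⟨j, hj⟩ := hb₀
    have h₀ : b ⟨0, j.pos⟩ ≤ segSum b (breakpt a b 0) (breakpt a b 1) :=
      le_segSum hb _ le_rfl (breakpt_lt_succ hi)
    exact div_pos ((hj.trans_le (hbmono (Nat.zero_le _))).trans_le h₀) (segSum_block_pos ha hi)
  | succ i ih => exact (ih (by omega)).trans (blockRatio_lt_succ ha hi)

theorem blockRatio_mul_le_of_eq_breakpt (ha : ∀ i, 0 < a i) {i : ℕ} (hi : i < numBlocks a b)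
    (j : Fin n) (hj : (j : ℕ) = breakpt a b i) : blockRatio a b i * a j ≤ b j := by
  have := blockRatio_mul_segSum_le ha hi (Nat.le_succ _) (breakpt_lt_succ hi)
  rwa [← hj, segSum_succ, segSum_succ] at this

theorem le_blockRatio_mul_of_succ_eq_breakpt (ha : ∀ i, 0 < a i) {i : ℕ}
    (hi : i < numBlocks a b) (j : Fin n) (hj : (j : ℕ) + 1 = breakpt a b (i + 1)) :
    b j ≤ blockRatio a b i * a j := by
  have hij : breakpt a b i ≤ j := by have := breakpt_lt_succ hi; omega
  have hpre := blockRatio_mul_segSum_le ha hi hij (by omega)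
  have hblock := blockRatio_mul ha hi
  rw [← hj, ← segSum_add_segSum a hij j.val.le_succ, ← segSum_add_segSum b hij j.val.le_succ,
    segSum_succ, segSum_succ, mul_add] at hblock
  linarith

theorem blockProfile_of_mem {i : ℕ} (hi : i < numBlocks a b) {j : Fin n}
    (hij : breakpt a b i ≤ j) (hji : (j : ℕ) < breakpt a b (i + 1)) :
    blockProfile a b j = blockRatio a b i * a j := by
  rw [blockProfile, blockOf_eq hi hij hji]

theorem sum_blockOf_mul (c : ℕ → ℝ) (d : Fin n → ℝ) :
    ∑ j : Fin n, c (blockOf a b j) * d j =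
      ∑ i ∈ Finset.range (numBlocks a b), c i * segSum d (breakpt a b i) (breakpt a b (i + 1)) := by
  rw [← segSum_zero_of_le _ (breakpt_numBlocks a b).ge,
    segSum_zero_eq_sum_range (breakpt_mono a b) (breakpt_zero a b)]
  refine Finset.sum_congr rfl fun i hi => ?_
  rw [← segSum_const_mul]
  exact segSum_congr fun j hij hji => by rw [blockOf_eq (Finset.mem_range.mp hi) hij hji]

theorem segSum_blockProfile {i p : ℕ} (hi : i < numBlocks a b)
    (hpi : p ≤ breakpt a b (i + 1)) :
    segSum (blockProfile a b) (breakpt a b i) p =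
      blockRatio a b i * segSum a (breakpt a b i) p := by
  rw [← segSum_const_mul]
  exact segSum_congr fun j hij hjp => blockProfile_of_mem hi hij (by omega)

theorem segSum_blockProfile_breakpt (ha : ∀ i, 0 < a i) {t : ℕ} (ht : t ≤ numBlocks a b) :
    segSum (blockProfile a b) 0 (breakpt a b t) = segSum b 0 (breakpt a b t) := by
  simp only [segSum_zero_eq_sum_range (breakpt_mono a b) (breakpt_zero a b)]
  refine Finset.sum_congr rfl fun i hi => ?_
  have hi : i < numBlocks a b := by simp at hi; omega
  rw [segSum_blockProfile hi le_rfl, blockRatio_mul ha hi]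

theorem sum_blockProfile (ha : ∀ i, 0 < a i) : ∑ j, blockProfile a b j = ∑ j, b j := by
  simpa only [breakpt_numBlocks, segSum_zero_of_le _ le_rfl]
    using segSum_blockProfile_breakpt (b := b) ha le_rfl

theorem segSum_blockProfile_le (ha : ∀ i, 0 < a i) (k : ℕ) :
    segSum (blockProfile a b) 0 k ≤ segSum b 0 k := by
  rcases le_or_gt n k with hk | hk
  · rw [segSum_zero_of_le _ hk, segSum_zero_of_le _ hk, sum_blockProfile ha]
  · have hi := blockOf_lt_numBlocks (a := a) (b := b) hk
    have hik := breakpt_blockOf_le (a := a) (b := b) k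
    rw [← segSum_add_segSum _ (Nat.zero_le _) hik, ← segSum_add_segSum b (Nat.zero_le _) hik,
      segSum_blockProfile_breakpt ha hi.le,
      segSum_blockProfile hi (lt_breakpt_blockOf_succ hk).le]
    linarith [blockRatio_mul_segSum_le ha hi hik (lt_breakpt_blockOf_succ hk).le]

theorem blockProfile_nonneg (ha : ∀ i, 0 < a i) (hb : ∀ i, 0 ≤ b i) (j : Fin n) :
    0 ≤ blockProfile a b j :=
  mul_nonneg (blockRatio_nonneg ha hb _) (ha j).le

/-- Across a block boundary `j + 1 = nᵢ₊₁` the profile drops because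
`αᵢ₊₁ a_{j+1} ≤ b_{j+1} ≤ b_j ≤ αᵢ a_j`. -/
theorem blockProfile_antitone (ha : ∀ i, 0 < a i) (hamono : Antitone a) (hb : ∀ i, 0 ≤ b i)
    (hbmono : Antitone b) : Antitone (blockProfile a b) := by
  have step : ∀ j j' : Fin n, (j' : ℕ) = j + 1 → blockProfile a b j' ≤ blockProfile a b j := by
    intro j j' hjj'
    have hi := blockOf_lt_numBlocks (a := a) (b := b) j.isLt
    have hij := breakpt_blockOf_le (a := a) (b := b) j
    have hji := lt_breakpt_blockOf_succ (a := a) (b := b) j.isLt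
    set i := blockOf a b j
    rw [blockProfile_of_mem hi hij hji]
    rcases (Nat.succ_le_of_lt hji).lt_or_eq with hin | hbd
    · rw [blockProfile_of_mem hi (by omega) (by omega)]
      exact mul_le_mul_of_nonneg_left (hamono (Fin.le_def.mpr (by omega)))
        (blockRatio_nonneg ha hb i)
    · have hi' : i + 1 < numBlocks a b := lt_numBlocks_of_breakpt_lt (by omega)
      rw [blockProfile_of_mem hi' (by omega) (by have := breakpt_lt_succ hi'; omega)]
      calc _ ≤ b j' := blockRatio_mul_le_of_eq_breakpt ha hi' j' (by omega)
        _ ≤ b j := hbmono (Fin.le_def.mpr (by omega))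
        _ ≤ _ := le_blockRatio_mul_of_succ_eq_breakpt ha hi j (by omega)
  cases n with
  | zero => exact fun j => j.elim0
  | succ n => exact Fin.antitone_iff_succ_le.mpr fun j => step _ _ (by simp)

theorem majorizes_blockProfile (ha : ∀ i, 0 < a i) (hamono : Antitone a) (hb : ∀ i, 0 ≤ b i)
    (hbmono : Antitone b) : Majorizes (blockProfile a b) b :=
  (majorizes_iff_of_antitone (blockProfile_antitone ha hamono hb hbmono) hbmono).mpr
    ⟨segSum_blockProfile_le ha, sum_blockProfile ha⟩

end BlockProfile

section Tangent

variable {p q : ℝ}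

theorem rpow_mul_mul_rpow (hpq : p + q = 1) {α a : ℝ} (hα : 0 ≤ α) (ha : 0 ≤ a) :
    a ^ p * (α * a) ^ q = α ^ q * a := by
  rw [Real.mul_rpow hα ha, mul_left_comm, ← Real.rpow_add' ha (by rw [hpq]; exact one_ne_zero),
    hpq, Real.rpow_one]

/-- The right-hand side is the tangent plane of the concave, positively homogeneous function
`(a, y) ↦ a ^ p * y ^ q` along the ray `y = α a`; it is weighted AM-GM for `α a` and `y`,
rescaled by `α ^ (-p)`. -/
theorem rpow_mul_rpow_lt_tangent (hp : 0 < p) (hq : 0 < q) (hpq : p + q = 1) {α a y : ℝ}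
    (hα : 0 < α) (ha : 0 ≤ a) (hy : 0 ≤ y) (hne : y ≠ α * a) :
    a ^ p * y ^ q < p * α ^ q * a + q * α ^ (q - 1) * y := by
  have hamgm := (Real.geom_mean_lt_arith_mean2_weighted_iff_of_pos hp hq
    (mul_nonneg hα.le ha) hy hpq).mpr hne.symm
  have hlhs : a ^ p * y ^ q = α ^ (-p) * ((α * a) ^ p * y ^ q) := by
    rw [Real.mul_rpow hα.le ha, ← mul_assoc, ← mul_assoc, ← Real.rpow_add hα, neg_add_cancel,
      Real.rpow_zero, one_mul]
  have hrhs : p * α ^ q * a + q * α ^ (q - 1) * y = α ^ (-p) * (p * (α * a) + q * y) := by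
    rw [show q - 1 = -p by linarith, show q = -p + 1 by linarith, Real.rpow_add_one hα.ne']
    ring
  rw [hlhs, hrhs]
  exact mul_lt_mul_of_pos_left hamgm (Real.rpow_pos_of_pos hα _)

theorem rpow_mul_rpow_le_tangent (hp : 0 < p) (hq : 0 < q) (hpq : p + q = 1) {α a y : ℝ}
    (hα : 0 < α) (ha : 0 ≤ a) (hy : 0 ≤ y) :
    a ^ p * y ^ q ≤ p * α ^ q * a + q * α ^ (q - 1) * y := by
  rcases eq_or_ne y (α * a) with rfl | hne
  · have hα' : α ^ (q - 1) * α = α ^ q := by rw [← Real.rpow_add_one hα.ne', sub_add_cancel]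
    rw [rpow_mul_mul_rpow hpq hα.le ha]
    linear_combination (-(q * a)) * hα' - α ^ q * a * hpq
  · exact (rpow_mul_rpow_lt_tangent hp hq hpq hα ha hy hne).le

end Tangent

theorem sum_range_mul_nonpos_of_antitone {c d : ℕ → ℝ} {k : ℕ}
    (hc : ∀ i, i + 1 < k → c (i + 1) ≤ c i) (hd : ∀ t ≤ k, ∑ i ∈ Finset.range t, d i ≤ 0)
    (hdk : ∑ i ∈ Finset.range k, d i = 0) : ∑ i ∈ Finset.range k, c i * d i ≤ 0 := by
  have h := Finset.sum_range_by_parts c d (n := k)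
  simp only [smul_eq_mul] at h
  rw [h, hdk, mul_zero, zero_sub, neg_nonpos]
  refine Finset.sum_nonneg fun i hi => ?_
  rw [Finset.mem_range] at hi
  exact mul_nonneg_of_nonpos_of_nonpos (sub_nonpos.mpr (hc i (by omega))) (hd _ (by omega))

section Optimality

variable {n : ℕ} {p q : ℝ} {a b : Fin n → ℝ}

/-- The slopes `αᵢ ^ (q - 1)` decrease from block to block, so Abel summation against the
prefix-sum deficits of `y` applies. -/
theorem sum_tangent_le_sum_blockProfile (hp : 0 < p) (hq : 0 < q) (hpq : p + q = 1)
    (ha : ∀ i, 0 < a i) (hb : ∀ i, 0 ≤ b i) (hbmono : Antitone b) (hb₀ : ∃ j, 0 < b j)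
    {y : Fin n → ℝ} (hy : ∀ k, segSum y 0 k ≤ segSum b 0 k) (hytot : ∑ j, y j = ∑ j, b j) :
    ∑ j : Fin n, (p * blockRatio a b (blockOf a b j) ^ q * a j +
        q * blockRatio a b (blockOf a b j) ^ (q - 1) * y j) ≤
      ∑ j, a j ^ p * blockProfile a b j ^ q := by
  have hα : ∀ {i}, i < numBlocks a b → 0 < blockRatio a b i := blockRatio_pos ha hb hbmono hb₀
  have hgap : ∑ j : Fin n, (p * blockRatio a b (blockOf a b j) ^ q * a j +
        q * blockRatio a b (blockOf a b j) ^ (q - 1) * y j) -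
      ∑ j, a j ^ p * blockProfile a b j ^ q =
      q * ∑ j : Fin n, blockRatio a b (blockOf a b j) ^ (q - 1) * (y - blockProfile a b) j := by
    rw [← Finset.sum_sub_distrib, Finset.mul_sum]
    refine Finset.sum_congr rfl fun j _ => ?_
    have hαj := hα (blockOf_lt_numBlocks (a := a) (b := b) j.isLt)
    have hα' : blockRatio a b (blockOf a b j) ^ (q - 1) * blockRatio a b (blockOf a b j) =
        blockRatio a b (blockOf a b j) ^ q := by
      rw [← Real.rpow_add_one hαj.ne', sub_add_cancel]
    rw [blockProfile, rpow_mul_mul_rpow hpq hαj.le (ha j).le, Pi.sub_apply, blockProfile]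
    linear_combination q * a j * hα' + blockRatio a b (blockOf a b j) ^ q * a j * hpq
  have hpartial : ∀ t ≤ numBlocks a b, ∑ i ∈ Finset.range t,
      segSum (y - blockProfile a b) (breakpt a b i) (breakpt a b (i + 1)) =
        segSum y 0 (breakpt a b t) - segSum b 0 (breakpt a b t) := fun t ht => by
    rw [← segSum_zero_eq_sum_range (breakpt_mono a b) (breakpt_zero a b), segSum_sub,
      segSum_blockProfile_breakpt ha ht]
  have habel :
      ∑ j : Fin n, blockRatio a b (blockOf a b j) ^ (q - 1) * (y - blockProfile a b) j ≤ 0 := by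
    rw [sum_blockOf_mul (fun i => blockRatio a b i ^ (q - 1))]
    refine sum_range_mul_nonpos_of_antitone (fun i hi => ?_) (fun t ht => ?_) ?_
    · exact Real.rpow_le_rpow_of_nonpos (hα (by omega)) (blockRatio_lt_succ ha hi).le
        (by linarith)
    · rw [hpartial t ht]
      exact sub_nonpos.mpr (hy _)
    · rw [hpartial _ le_rfl, breakpt_numBlocks, segSum_zero_of_le _ le_rfl,
        segSum_zero_of_le _ le_rfl, hytot, sub_self]
  linarith [mul_nonpos_of_nonneg_of_nonpos hq.le habel]

theorem eq_blockProfile_of_le (hp : 0 < p) (hq : 0 < q) (hpq : p + q = 1) (ha : ∀ i, 0 < a i)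
    (hb : ∀ i, 0 ≤ b i) (hbmono : Antitone b) {x : Fin n → ℝ} (hxmono : Antitone x)
    (hx : ∀ i, 0 ≤ x i) (hxb : Majorizes x b)
    (hle : ∑ j, a j ^ p * blockProfile a b j ^ q ≤ ∑ j, a j ^ p * x j ^ q) :
    x = blockProfile a b := by
  obtain ⟨hxpre, hxtot⟩ := (majorizes_iff_of_antitone hxmono hbmono).mp hxb
  by_cases hb₀ : ∃ j, 0 < b j
  · by_contra hne
    obtain ⟨j₀, hj₀⟩ := Function.ne_iff.mp hne
    have hα : ∀ j : Fin n, 0 < blockRatio a b (blockOf a b j) := fun j =>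
      blockRatio_pos ha hb hbmono hb₀ (blockOf_lt_numBlocks j.isLt)
    have hlt : ∑ j, a j ^ p * x j ^ q <
        ∑ j : Fin n, (p * blockRatio a b (blockOf a b j) ^ q * a j +
          q * blockRatio a b (blockOf a b j) ^ (q - 1) * x j) :=
      Finset.sum_lt_sum
        (fun j _ => rpow_mul_rpow_le_tangent hp hq hpq (hα j) (ha j).le (hx j))
        ⟨j₀, Finset.mem_univ _, rpow_mul_rpow_lt_tangent hp hq hpq (hα j₀) (ha j₀).le (hx j₀) hj₀⟩
    exact (hlt.trans_le ((sum_tangent_le_sum_blockProfile hp hq hpq ha hb hbmono hb₀ hxpre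
      hxtot).trans hle)).false
  · simp only [not_exists, not_lt] at hb₀
    have hb0 : ∀ j, b j = 0 := fun j => le_antisymm (hb₀ j) (hb j)
    have hx0 : ∀ j, x j = 0 := fun j =>
      (Finset.sum_eq_zero_iff_of_nonneg fun j _ => hx j).mp (by simp [hxtot, hb0]) j
        (Finset.mem_univ j)
    funext j
    simp [hx0, blockProfile, blockRatio, segSum, hb0]

end Optimality

/-- If `a` is decreasing and positive, `b` decreasing nonnegative, and `x`
is a decreasing nonnegative vector with `x ≺ b` maximizing `Σ a_j^p y_j^q` over decreasing
nonnegative `y ≺ b`, then there is a partition `0 = n_0 < n_1 < ⋯ < n_k = n` such that on each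
block the sums of `x` and `b` agree, `x` is the scalar multiple
`(Σ b)/(Σ a)` of `a`, and each `n_{i+1}` is the largest `r` for which the normalized segment of
`a` on `(n_i, r]` is majorized by the corresponding normalized segment of `b`. -/
theorem stmt_19 {n : ℕ} (p q : ℝ) (hp : 0 < p) (hq : 0 < q) (hpq : p + q = 1)
    (a b x : Fin n → ℝ)
    (hamono : ∀ i j : Fin n, i ≤ j → a j ≤ a i) (hapos : ∀ i, 0 < a i)
    (hbmono : ∀ i j : Fin n, i ≤ j → b j ≤ b i) (hbnn : ∀ i, 0 ≤ b i)
    (hxmono : ∀ i j : Fin n, i ≤ j → x j ≤ x i) (hxnn : ∀ i, 0 ≤ x i)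
    (hxb : Majorizes x b)
    (hopt : ∀ y : Fin n → ℝ, (∀ i j : Fin n, i ≤ j → y j ≤ y i) → (∀ i, 0 ≤ y i) →
      Majorizes y b → (∑ j, a j ^ p * y j ^ q) ≤ ∑ j, a j ^ p * x j ^ q) :
    ∃ (k : ℕ) (nIdx : ℕ → ℕ), nIdx 0 = 0 ∧ nIdx k = n ∧
      (∀ i < k, nIdx i < nIdx (i + 1)) ∧
      ∀ i < k,
        segSum x (nIdx i) (nIdx (i + 1)) = segSum b (nIdx i) (nIdx (i + 1)) ∧
        (∀ j : Fin n, nIdx i ≤ (j : ℕ) → (j : ℕ) < nIdx (i + 1) →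
          x j * segSum a (nIdx i) (nIdx (i + 1)) = segSum b (nIdx i) (nIdx (i + 1)) * a j) ∧
        SegMaj a b (nIdx i) (nIdx (i + 1)) ∧
        ∀ r : ℕ, nIdx i < r → r ≤ n → SegMaj a b (nIdx i) r → r ≤ nIdx (i + 1) := by
  obtain rfl : x = blockProfile a b := eq_blockProfile_of_le hp hq hpq hapos hbnn hbmono
    hxmono hxnn hxb
    (hopt _ (blockProfile_antitone hapos hamono hbnn hbmono) (blockProfile_nonneg hapos hbnn)
      (majorizes_blockProfile hapos hamono hbnn hbmono))
  refine ⟨numBlocks a b, breakpt a b, breakpt_zero a b, breakpt_numBlocks a b,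
    fun i hi => breakpt_lt_succ hi, fun i hi => ⟨?_, fun j hij hji => ?_, segMaj_breakpt hi,
      fun r hir hrn h => le_breakpt_succ hi hir hrn h⟩⟩
  · rw [segSum_blockProfile hi le_rfl, blockRatio_mul hapos hi]
  · rw [blockProfile_of_mem hi hij hji, mul_right_comm, blockRatio_mul hapos hi]
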